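/- arXiv:1801.00109 — 2 statements merged into one kernel-verified Lean document; each statement's English description precedes it below -/
import Mathlib

section
/- Let F be a prime field of order p, let n ≥ 1, and let N ≥ 1 be an integer with 10·n·N ≤ p. Let A = {1, …, N}^n ⊆ F^n (identifying {1,…,N} with residues mod p) and define the Bohr-type set A* = {ξ ∈ F^n : |Σ_{x ∈ A} e(x·ξ)| ≥ |A|/10}, where e(t) = e^{2πit/p}. Then A* contains all ξ = (ξ₁, …, ξₙ) with each coordinate ξⱼ represented by an integer of absolute value at most p/(10nN); in particular |A*| ≥ c_n (p/N)^n for some constant c_n > 0 depending only on n. -/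
/-!
The exponential sum over the cube factors as `∏ⱼ ∑_{k=1}^N e(k ξⱼ)`. If every `|ξⱼ| ≤ p/(10nN)`,
each phase `2πkξⱼ/p` is at most `π/(5n)` in absolute value, so every term lies within `π/(5n)`
of `1` and each factor has modulus at least `N(1 - π/(5n))`. By Bernoulli's inequality the
product is at least `Nⁿ(1 - π/5) ≥ |A|/10`. Counting the `ξ` with coordinates in
`[0, p/(10nN)]` then gives `|A*| ≥ (p/(10nN))ⁿ`, i.e. `c_n = (10n)⁻ⁿ`.
-/

open Finset

noncomputable def e (p : ℕ) (t : ZMod p) : ℂ :=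
  Complex.exp (2 * Real.pi * Complex.I * (t.val : ℂ) / (p : ℂ))

/-- `A = {1, …, N}^n ⊆ F^n`, identifying `{1,…,N}` with residues mod `p`. -/
def cubeA (p n N : ℕ) : Finset (Fin n → ZMod p) :=
  Fintype.piFinset fun _ => (Finset.Icc 1 N).image (fun k : ℕ => (k : ZMod p))

/-- The Bohr-type set `A* = {ξ : |Σ_{x∈A} e(x·ξ)| ≥ |A|/10}`. -/
noncomputable def bohr (p n N : ℕ) [NeZero p] : Finset (Fin n → ZMod p) :=
  Finset.univ.filter fun ξ =>
    ((cubeA p n N).card : ℝ) / 10 ≤ ‖∑ x ∈ cubeA p n N, e p (∑ i, x i * ξ i)‖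

section Character

variable {p : ℕ} [NeZero p]

lemma e_eq_stdAddChar (t : ZMod p) : e p t = ZMod.stdAddChar t := by
  rw [ZMod.stdAddChar_apply, ZMod.toCircle_apply, e]

lemma e_sum {ι : Type*} (s : Finset ι) (f : ι → ZMod p) :
    e p (∑ i ∈ s, f i) = ∏ i ∈ s, e p (f i) := by
  simp only [e_eq_stdAddChar]
  induction s using Finset.cons_induction with
  | empty => simp
  | cons i s hi ih => rw [sum_cons, prod_cons, AddChar.map_add_eq_mul, ih]

lemma norm_e_intCast_sub_one_le (m : ℤ) :
    ‖e p m - 1‖ ≤ 2 * Real.pi * |(m : ℝ)| / p := by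
  have hp : (0 : ℝ) < p := Nat.cast_pos.2 (Nat.pos_of_neZero p)
  rw [e_eq_stdAddChar, ZMod.stdAddChar_coe, show 2 * Real.pi * Complex.I * m / p
    = Complex.I * ((2 * Real.pi * m / p : ℝ) : ℂ) by push_cast; ring]
  refine Real.norm_exp_I_mul_ofReal_sub_one_le.trans_eq ?_
  rw [Real.norm_eq_abs, abs_div, abs_mul, abs_of_pos Real.two_pi_pos, abs_of_pos hp]

end Character

lemma card_mul_one_sub_le_norm_sum_of_norm_sub_one_le {ι 𝕜 : Type*} [RCLike 𝕜] (s : Finset ι)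
    (z : ι → 𝕜) {δ : ℝ} (hz : ∀ i ∈ s, ‖z i - 1‖ ≤ δ) : #s * (1 - δ) ≤ ‖∑ i ∈ s, z i‖ := by
  have hdev : ‖(#s : 𝕜) - ∑ i ∈ s, z i‖ ≤ #s * δ := calc
    ‖(#s : 𝕜) - ∑ i ∈ s, z i‖ = ‖∑ i ∈ s, (z i - 1)‖ := by
      rw [← norm_neg]; simp [sum_sub_distrib]
    _ ≤ ∑ i ∈ s, ‖z i - 1‖ := norm_sum_le _ _
    _ ≤ #s * δ := by simpa using sum_le_sum hz
  have := norm_sub_norm_le (#s : 𝕜) (∑ i ∈ s, z i)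
  rw [RCLike.norm_natCast] at this
  linarith

section Cube

variable {p n N : ℕ}

lemma injOn_natCast_Icc (hNp : N < p) : Set.InjOn (Nat.cast : ℕ → ZMod p) (Icc 1 N) :=
  (CharP.natCast_injOn_Iio (ZMod p) p).mono fun _ hk => (mem_Icc.1 hk).2.trans_lt hNp

lemma card_cubeA (hNp : N < p) : #(cubeA p n N) = N ^ n := by
  rw [cubeA, Fintype.card_piFinset_const, card_image_of_injOn (injOn_natCast_Icc hNp),
    Nat.card_Icc, Nat.add_sub_cancel]

lemma sum_cubeA_e_eq_prod [NeZero p] (hNp : N < p) (ξ : Fin n → ZMod p) :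
    ∑ x ∈ cubeA p n N, e p (∑ i, x i * ξ i) = ∏ i, ∑ k ∈ Icc 1 N, e p (k * ξ i) := by
  simp_rw [e_sum]
  rw [cubeA, ← prod_univ_sum _ fun i t => e p (t * ξ i)]
  exact prod_congr rfl fun i _ => sum_image (injOn_natCast_Icc hNp)

end Cube

lemma natCast_mul_one_sub_le_norm_sum_Icc_e {p : ℕ} [NeZero p] (N : ℕ) (a : ZMod p) :
    N * (1 - 2 * Real.pi * N * |(a.valMinAbs : ℝ)| / p) ≤ ‖∑ k ∈ Icc 1 N, e p (k * a)‖ := by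
  have hterm : ∀ k ∈ Icc 1 N,
      ‖e p (k * a) - 1‖ ≤ 2 * Real.pi * N * |(a.valMinAbs : ℝ)| / p := by
    intro k hk
    have hka : (k : ZMod p) * a = ((k * a.valMinAbs : ℤ) : ZMod p) := by
      push_cast [ZMod.coe_valMinAbs]; rfl
    rw [hka]
    refine (norm_e_intCast_sub_one_le _).trans ?_
    push_cast
    rw [abs_mul, Nat.abs_cast, mul_assoc _ (N : ℝ)]
    gcongr
    exact_mod_cast (mem_Icc.1 hk).2
  simpa using card_mul_one_sub_le_norm_sum_of_norm_sub_one_le (Icc 1 N) _ hterm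

lemma mem_bohr_of_abs_valMinAbs_le {p n N : ℕ} [NeZero p] (hn : 1 ≤ n) (hN : 1 ≤ N)
    (hNp : N < p) {ξ : Fin n → ZMod p} (hξ : ∀ j, |((ξ j).valMinAbs : ℝ)| ≤ p / (10 * n * N)) :
    ξ ∈ bohr p n N := by
  have hn0 : (0 : ℝ) < n := by exact_mod_cast hn
  have hN0 : (0 : ℝ) < N := by exact_mod_cast hN
  have hp0 : (0 : ℝ) < p := Nat.cast_pos.2 (Nat.pos_of_neZero p)
  set δ := Real.pi / (5 * n) with hδ
  have hnδ : n * δ = Real.pi / 5 := by rw [hδ]; field_simp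
  have hδ1 : δ ≤ 1 := by
    have : (1 : ℝ) ≤ n := by exact_mod_cast hn
    nlinarith [Real.pi_le_four, show 0 ≤ δ by positivity]
  have hfactor : ∀ j, N * (1 - δ) ≤ ‖∑ k ∈ Icc 1 N, e p (k * ξ j)‖ := by
    refine fun j => le_trans ?_ (natCast_mul_one_sub_le_norm_sum_Icc_e N (ξ j))
    have : 2 * Real.pi * N * |((ξ j).valMinAbs : ℝ)| / p ≤ δ := calc
      _ ≤ 2 * Real.pi * N * (p / (10 * n * N)) / p := by gcongr; exact hξ j
      _ = δ := by rw [hδ]; field_simp; ring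
    gcongr
  have hbernoulli : 1 - Real.pi / 5 ≤ (1 - δ) ^ n := by
    have := one_add_mul_le_pow (a := -δ) (by linarith) n
    rw [← sub_eq_add_neg] at this
    linarith
  rw [bohr, mem_filter, sum_cubeA_e_eq_prod hNp, card_cubeA hNp, norm_prod]
  refine ⟨mem_univ _, ?_⟩
  calc ((N ^ n : ℕ) : ℝ) / 10 ≤ N ^ n * (1 - Real.pi / 5) := by
        push_cast; nlinarith [Real.pi_le_four, pow_pos hN0 n]
    _ ≤ N ^ n * (1 - δ) ^ n := by gcongr
    _ = ∏ _ : Fin n, (N * (1 - δ)) := by simp [mul_pow]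
    _ ≤ _ := prod_le_prod (fun _ _ => mul_nonneg hN0.le (by linarith)) fun j _ => hfactor j

noncomputable def smallResidues (p : ℕ) [NeZero p] (M : ℝ) : Finset (ZMod p) :=
  {a | |(a.valMinAbs : ℝ)| ≤ M}

lemma le_card_smallResidues {p : ℕ} [NeZero p] {M : ℝ} (hM0 : 0 ≤ M) (hMp : 2 * M ≤ p) :
    M ≤ #(smallResidues p M) := by
  have hK : ⌊M⌋₊ ≤ p / 2 := by
    rw [Nat.le_div_iff_mul_le two_pos, ← Nat.cast_le (α := ℝ)]
    push_cast
    linarith [Nat.floor_le hM0]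
  have hinj : Set.InjOn (Nat.cast : ℕ → ZMod p) (range (⌊M⌋₊ + 1)) :=
    (CharP.natCast_injOn_Iio (ZMod p) p).mono fun k hk => by
      have := Nat.pos_of_neZero p
      simp only [coe_range, Set.mem_Iio] at hk ⊢
      omega
  have hsub : (range (⌊M⌋₊ + 1)).image (Nat.cast : ℕ → ZMod p) ⊆ smallResidues p M := by
    intro a ha
    obtain ⟨k, hk, rfl⟩ := mem_image.1 ha
    have hkK : k ≤ ⌊M⌋₊ := Nat.lt_succ_iff.1 (mem_range.1 hk)
    rw [smallResidues, mem_filter, ZMod.valMinAbs_natCast_of_le_half (hkK.trans hK)]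
    refine ⟨mem_univ _, ?_⟩
    push_cast
    rw [abs_of_nonneg k.cast_nonneg]
    exact (Nat.le_floor_iff hM0).1 hkK
  calc M ≤ ⌊M⌋₊ + 1 := (Nat.lt_floor_add_one M).le
    _ = #((range (⌊M⌋₊ + 1)).image (Nat.cast : ℕ → ZMod p)) := by
      rw [card_image_of_injOn hinj, card_range]; push_cast; rfl
    _ ≤ _ := by exact_mod_cast card_le_card hsub

/-- The Bohr set `A*` contains all `ξ` whose coordinates have representatives of
absolute value at most `p/(10nN)`; in particular `|A*| ≥ c_n (p/N)^n` for a
constant `c_n > 0` depending only on `n`. -/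
theorem bohr_lower_bound (n : ℕ) (hn : 1 ≤ n) :
    ∃ c : ℝ, 0 < c ∧
      ∀ (p N : ℕ) [Fact p.Prime], 1 ≤ N → 10 * n * N ≤ p →
        (∀ ξ : Fin n → ZMod p,
            (∀ j, |((ξ j).valMinAbs : ℝ)| ≤ (p : ℝ) / (10 * n * N)) →
            ξ ∈ bohr p n N) ∧
        c * ((p : ℝ) / N) ^ n ≤ ((bohr p n N).card : ℝ) := by
  have hn0 : (0 : ℝ) < n := by exact_mod_cast hn
  refine ⟨(1 / (10 * n)) ^ n, pow_pos (by positivity) n, fun p N _ hN hpN => ?_⟩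
  have hNp : N < p := by nlinarith
  have hmem : ∀ ξ : Fin n → ZMod p, (∀ j, |((ξ j).valMinAbs : ℝ)| ≤ p / (10 * n * N)) →
      ξ ∈ bohr p n N := fun _ => mem_bohr_of_abs_valMinAbs_le hn hN hNp
  refine ⟨hmem, ?_⟩
  set M : ℝ := p / (10 * n * N)
  have hM0 : 0 ≤ M := by positivity
  have hMp : 2 * M ≤ p := by
    have : M ≤ p / 10 := div_le_div_of_nonneg_left (Nat.cast_nonneg p) (by norm_num)
      (by exact_mod_cast (by nlinarith : 10 ≤ 10 * n * N))
    linarith [(Nat.cast_nonneg p : (0 : ℝ) ≤ p)]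
  let box := Fintype.piFinset fun _ : Fin n => smallResidues p M
  calc (1 / (10 * n)) ^ n * ((p : ℝ) / N) ^ n = M ^ n := by
        rw [← mul_pow]; congr 1; simp only [M]; field_simp
    _ ≤ (#box : ℝ) := by
        rw [Fintype.card_piFinset_const]; push_cast
        exact pow_le_pow_left₀ hM0 (le_card_smallResidues hM0 hMp) n
    _ ≤ #(bohr p n N) := by
        exact_mod_cast card_le_card fun ξ hξ => hmem ξ fun j => by
          simpa [smallResidues] using Fintype.mem_piFinset.1 hξ j
end

section
/- Let F be a prime field of order p, 0 < β ≤ α < n, let N be an integer with N^n ≈ p^{α−β/2} and 10nN ≤ p, and set A = {1,…,N}^n ⊆ F^n. Let E ⊆ F^n satisfy |E| ≈ p^α, |1̂_E(ξ)| ≤ C_n √|E| √(log p) for all ξ ≠ 0, and |E ∩ A| ≤ |A|/100. Define μ = (1_E + 1_A)/(|E| + |A|). Then μ is a probability measure on F^n satisfying μ(x) ≤ C·p^{−α} for all x, and |μ̂(ξ)| ≤ C·(p^{−α/2}√(log p) + p^{−β/2}) for all ξ ≠ 0, where C is independent of p. -/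
open Finset

noncomputable def dft {p n : ℕ} [NeZero p] (f : (Fin n → ZMod p) → ℂ)
    (ξ : Fin n → ZMod p) : ℂ :=
  ∑ x : Fin n → ZMod p, e p (-(∑ i, x i * ξ i)) * f x

/-- The measure `μ = (1_E + 1_A)/(|E| + |A|)`. -/
noncomputable def combMeasure (p n N : ℕ) (E : Finset (Fin n → ZMod p))
    (x : Fin n → ZMod p) : ℝ :=
  ((if x ∈ E then 1 else 0) + (if x ∈ cubeA p n N then 1 else 0)) /
    ((E.card : ℝ) + ((cubeA p n N).card : ℝ))

lemma norm_e (p : ℕ) (t : ZMod p) : ‖e p t‖ = 1 := by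
  have h : e p t = Complex.exp (((2 * Real.pi * t.val / p : ℝ) : ℂ) * Complex.I) := by
    unfold e; push_cast; ring_nf
  rw [h, Complex.norm_exp_ofReal_mul_I]

section Fourier

variable {p n : ℕ} [NeZero p]

lemma norm_dft_le_sum_norm (f : (Fin n → ZMod p) → ℂ) (ξ : Fin n → ZMod p) :
    ‖dft f ξ‖ ≤ ∑ x, ‖f x‖ :=
  (norm_sum_le _ _).trans <| Finset.sum_le_sum fun x _ => by rw [norm_mul, norm_e, one_mul]

lemma norm_dft_indicator_le (S : Finset (Fin n → ZMod p)) (ξ : Fin n → ZMod p) :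
    ‖dft (fun x => if x ∈ S then (1 : ℂ) else 0) ξ‖ ≤ S.card := by
  refine (norm_dft_le_sum_norm _ ξ).trans (le_of_eq ?_)
  simp only [apply_ite norm, norm_one, norm_zero, Finset.sum_ite_mem, Finset.univ_inter,
    Finset.sum_const, nsmul_eq_mul, mul_one]

end Fourier

lemma card_cubeA_le (p n N : ℕ) : ((cubeA p n N).card : ℝ) ≤ (N : ℝ) ^ n := by
  have h : (cubeA p n N).card ≤ N ^ n := by
    rw [cubeA, Fintype.card_piFinset]
    calc ∏ _i : Fin n, ((Finset.Icc 1 N).image (fun k : ℕ => (k : ZMod p))).card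
        ≤ ∏ _i : Fin n, N :=
          Finset.prod_le_prod' fun _ _ => Finset.card_image_le.trans (by simp)
      _ = N ^ n := by simp
  exact_mod_cast h

section combMeasure

variable {p n N : ℕ} {E : Finset (Fin n → ZMod p)}

lemma combMeasure_nonneg (x : Fin n → ZMod p) : 0 ≤ combMeasure p n N E x := by
  unfold combMeasure; positivity

lemma sum_combMeasure [NeZero p] (hE : E.Nonempty) : ∑ x, combMeasure p n N E x = 1 := by
  have hD : (0 : ℝ) < E.card + (cubeA p n N).card := by
    have := hE.card_pos; positivity
  unfold combMeasure
  rw [← Finset.sum_div, Finset.sum_add_distrib]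
  simp only [Finset.sum_ite_mem, Finset.univ_inter, Finset.sum_const, nsmul_eq_mul, mul_one]
  exact div_self hD.ne'

lemma combMeasure_le (x : Fin n → ZMod p) :
    combMeasure p n N E x ≤ 2 / ((E.card : ℝ) + (cubeA p n N).card) := by
  unfold combMeasure
  gcongr
  split_ifs <;> norm_num

lemma dft_combMeasure [NeZero p] (ξ : Fin n → ZMod p) :
    dft (fun x => (combMeasure p n N E x : ℂ)) ξ
      = (dft (fun x => if x ∈ E then (1 : ℂ) else 0) ξ
          + dft (fun x => if x ∈ cubeA p n N then (1 : ℂ) else 0) ξ)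
        / (((E.card : ℝ) + (cubeA p n N).card : ℝ) : ℂ) := by
  unfold dft combMeasure
  rw [← Finset.sum_add_distrib, Finset.sum_div]
  refine Finset.sum_congr rfl fun x _ => ?_
  push_cast [apply_ite Complex.ofReal]
  ring

lemma norm_dft_combMeasure_le [NeZero p] (hE : E.Nonempty) (ξ : Fin n → ZMod p) :
    ‖dft (fun x => (combMeasure p n N E x : ℂ)) ξ‖
      ≤ ‖dft (fun x => if x ∈ E then (1 : ℂ) else 0) ξ‖ / E.card
        + (cubeA p n N).card / E.card := by
  have hE0 : (0 : ℝ) < E.card := by exact_mod_cast hE.card_pos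
  rw [dft_combMeasure, norm_div, Complex.norm_of_nonneg (by positivity), ← add_div]
  calc _ ≤ (‖dft (fun x => if x ∈ E then (1 : ℂ) else 0) ξ‖ + (cubeA p n N).card)
          / ((E.card : ℝ) + (cubeA p n N).card) := by
        gcongr
        exact (norm_add_le _ _).trans (by gcongr; exact norm_dft_indicator_le _ ξ)
    _ ≤ _ := by gcongr; simp

end combMeasure

section RpowBounds

variable {q c α x : ℝ}

lemma sqrt_div_self_le_rpow (hc : 0 < c) (hq : 0 < q) (hx : c * q ^ α ≤ x) :
    √x / x ≤ q ^ (-α / 2) / √c := by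
  have hsqrt : √(c * q ^ α) = √c * q ^ (α / 2) := by
    rw [Real.sqrt_mul hc.le, Real.sqrt_eq_rpow (q ^ α), ← Real.rpow_mul hq.le]; ring_nf
  have hrhs : q ^ (-α / 2) / √c = (√c * q ^ (α / 2))⁻¹ := by
    rw [neg_div, Real.rpow_neg hq.le, mul_inv, mul_comm, div_eq_mul_inv]
  rw [Real.sqrt_div_self', one_div, hrhs, ← hsqrt]
  gcongr

lemma div_le_of_le_mul_sqrt {K L a : ℝ} (hc : 0 < c) (hq : 0 < q) (hK : 0 ≤ K)
    (hx : c * q ^ α ≤ x) (ha : a ≤ K * √x * √L) :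
    a / x ≤ K / √c * (q ^ (-α / 2) * √L) := by
  have hx0 : 0 < x := lt_of_lt_of_le (by positivity) hx
  calc a / x ≤ K * √L * (√x / x) := by rw [mul_div_assoc']; gcongr; linarith
    _ ≤ K * √L * (q ^ (-α / 2) / √c) := by
      gcongr K * √L * ?_; exact sqrt_div_self_le_rpow hc hq hx
    _ = K / √c * (q ^ (-α / 2) * √L) := by ring

lemma div_le_of_le_rpow_sub {C γ a : ℝ} (hc : 0 < c) (hq : 0 < q) (ha₀ : 0 ≤ a)
    (ha : a ≤ C * q ^ (α - γ)) (hx : c * q ^ α ≤ x) :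
    a / x ≤ C / c * q ^ (-γ) :=
  calc a / x ≤ C * q ^ (α - γ) / (c * q ^ α) :=
        div_le_div₀ (ha₀.trans ha) ha (by positivity) hx
    _ = C / c * q ^ (-γ) := by
      rw [mul_div_mul_comm, ← Real.rpow_sub hq]; ring_nf

end RpowBounds

theorem comb_measure_properties_general (n : ℕ) (α β c₁ c₂ c₃ c₄ Cn : ℝ)
    (hc₂ : 0 < c₂) (hc₃ : 0 < c₃) (hCn : 0 < Cn) :
    ∃ C : ℝ, 0 < C ∧
      ∀ (p N : ℕ) [Fact p.Prime] (E : Finset (Fin n → ZMod p)),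
        1 ≤ N → 10 * n * N ≤ p →
        c₁ * (p : ℝ) ^ (α - β / 2) ≤ (N : ℝ) ^ n →
        (N : ℝ) ^ n ≤ c₂ * (p : ℝ) ^ (α - β / 2) →
        c₃ * (p : ℝ) ^ α ≤ (E.card : ℝ) →
        (E.card : ℝ) ≤ c₄ * (p : ℝ) ^ α →
        (∀ ξ : Fin n → ZMod p, ξ ≠ 0 →
            ‖dft (fun x => if x ∈ E then (1 : ℂ) else 0) ξ‖
              ≤ Cn * Real.sqrt E.card * Real.sqrt (Real.log p)) →
        ((E ∩ cubeA p n N).card : ℝ) ≤ ((cubeA p n N).card : ℝ) / 100 →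
        (∀ x, 0 ≤ combMeasure p n N E x) ∧
        (∑ x, combMeasure p n N E x) = 1 ∧
        (∀ x, combMeasure p n N E x ≤ C * (p : ℝ) ^ (-α)) ∧
        (∀ ξ : Fin n → ZMod p, ξ ≠ 0 →
            ‖dft (fun x => (combMeasure p n N E x : ℂ)) ξ‖
              ≤ C * ((p : ℝ) ^ (-α / 2) * Real.sqrt (Real.log p)
                      + (p : ℝ) ^ (-β / 2))) := by
  set C := (2 + c₂) / c₃ + Cn / √c₃
  have hC₁ : 2 / c₃ ≤ C := (div_le_div_of_nonneg_right (by linarith) hc₃.le).trans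
    (le_add_of_nonneg_right (by positivity))
  have hC₂ : c₂ / c₃ ≤ C := (div_le_div_of_nonneg_right (by linarith) hc₃.le).trans
    (le_add_of_nonneg_right (by positivity))
  have hC₃ : Cn / √c₃ ≤ C := le_add_of_nonneg_left (by positivity)
  refine ⟨C, by positivity, fun p N hp E _ _ _ hA hE _ hEf _ => ?_⟩
  have hp : (0 : ℝ) < p := by exact_mod_cast hp.out.pos
  have hEne : E.Nonempty := Finset.card_pos.mp <| by
    exact_mod_cast (lt_of_lt_of_le (by positivity) hE : (0 : ℝ) < E.card)
  refine ⟨combMeasure_nonneg, sum_combMeasure hEne, fun x => ?_, fun ξ hξ => ?_⟩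
  · calc combMeasure p n N E x ≤ 2 / (c₃ * (p : ℝ) ^ α) :=
          (combMeasure_le x).trans <| by
            gcongr; exact hE.trans (le_add_of_nonneg_right (by positivity))
      _ = 2 / c₃ * (p : ℝ) ^ (-α) := by rw [Real.rpow_neg hp.le]; field_simp
      _ ≤ C * (p : ℝ) ^ (-α) := by gcongr
  · calc _ ≤ _ := norm_dft_combMeasure_le hEne ξ
      _ ≤ Cn / √c₃ * ((p : ℝ) ^ (-α / 2) * √(Real.log p))
            + c₂ / c₃ * (p : ℝ) ^ (-(β / 2)) :=
        add_le_add (div_le_of_le_mul_sqrt hc₃ hp hCn.le hE (hEf ξ hξ))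
          (div_le_of_le_rpow_sub hc₃ hp (by positivity) ((card_cubeA_le p n N).trans hA) hE)
      _ ≤ C * ((p : ℝ) ^ (-α / 2) * √(Real.log p)) + C * (p : ℝ) ^ (-(β / 2)) := by gcongr
      _ = _ := by rw [neg_div 2 β, mul_add]

/-- Construction of the measure: `μ = (1_E + 1_A)/(|E|+|A|)` is a probability
measure with `μ(x) ≤ C p^{-α}` and `|μ̂(ξ)| ≤ C (p^{-α/2}√(log p) + p^{-β/2})`
for `ξ ≠ 0`, with `C` independent of `p`. -/
theorem comb_measure_properties (n : ℕ) (α β c₁ c₂ c₃ c₄ Cn : ℝ)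
    (hβ0 : 0 < β) (hβα : β ≤ α) (hαn : α < n)
    (hc₁ : 0 < c₁) (hc₂ : 0 < c₂) (hc₃ : 0 < c₃) (hc₄ : 0 < c₄) (hCn : 0 < Cn) :
    ∃ C : ℝ, 0 < C ∧
      ∀ (p N : ℕ) [Fact p.Prime] (E : Finset (Fin n → ZMod p)),
        1 ≤ N → 10 * n * N ≤ p →
        c₁ * (p : ℝ) ^ (α - β / 2) ≤ (N : ℝ) ^ n →
        (N : ℝ) ^ n ≤ c₂ * (p : ℝ) ^ (α - β / 2) →
        c₃ * (p : ℝ) ^ α ≤ (E.card : ℝ) →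
        (E.card : ℝ) ≤ c₄ * (p : ℝ) ^ α →
        (∀ ξ : Fin n → ZMod p, ξ ≠ 0 →
            ‖dft (fun x => if x ∈ E then (1 : ℂ) else 0) ξ‖
              ≤ Cn * Real.sqrt E.card * Real.sqrt (Real.log p)) →
        ((E ∩ cubeA p n N).card : ℝ) ≤ ((cubeA p n N).card : ℝ) / 100 →
        (∀ x, 0 ≤ combMeasure p n N E x) ∧
        (∑ x, combMeasure p n N E x) = 1 ∧
        (∀ x, combMeasure p n N E x ≤ C * (p : ℝ) ^ (-α)) ∧
        (∀ ξ : Fin n → ZMod p, ξ ≠ 0 →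
            ‖dft (fun x => (combMeasure p n N E x : ℂ)) ξ‖
              ≤ C * ((p : ℝ) ^ (-α / 2) * Real.sqrt (Real.log p)
                      + (p : ℝ) ^ (-β / 2))) :=
  comb_measure_properties_general n α β c₁ c₂ c₃ c₄ Cn hc₂ hc₃ hCn
end
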